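/- Let U be a finite nonempty set and d : U → [0,1] a function with average d̄ = (Σ_{u∈U} d(u))/|U| satisfying 0 < d̄ ≤ 1. Let k = ⌈log₂(1/d̄)⌉ + 2 and, for r ∈ {1,…,k−1}, let U_r = {u ∈ U : 2^{−r} < d(u) ≤ 2^{−r+1}}. Then there exists r* ∈ {1,…,k−1} such that |U_{r*}|/|U| ≥ 2^{r*}·d̄/(4(k−1)). (Lemma 2.4, level-set pigeonhole for out-degrees.) -/

import Mathlib

/-!
Call `u` heavy if `d u > 2^{-(k-1)}`. The choice of `k` makes `2^{-(k-1)} ≤ d̄ / 2`, so the light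
vertices carry at most half of the total mass `|U| d̄`, and the heavy ones at least `|U| d̄ / 2`.
Since `d ≤ 1`, every heavy vertex lies in exactly one level set `U_r`, `1 ≤ r ≤ k - 1`, where it
has degree at most `2^{1-r}`; hence `∑_r |U_r| 2^{1-r} ≥ |U| d̄ / 2`, and some one of the `k - 1`
terms is at least the average `|U| d̄ / (2(k-1))`.
-/

open Finset Real

/-- The paper's `U_r`. -/
noncomputable def levelSet {α : Type*} (U : Finset α) (d : α → ℝ) (r : ℕ) : Finset α :=
  U.filter fun u => (2 : ℝ)⁻¹ ^ r < d u ∧ d u ≤ (2 : ℝ)⁻¹ ^ (r - 1)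

section LevelSets

variable {α : Type*} (U : Finset α) (d : α → ℝ)

theorem pairwiseDisjoint_levelSet : (Set.univ : Set ℕ).PairwiseDisjoint (levelSet U d) := by
  have key : ∀ r s : ℕ, r < s → Disjoint (levelSet U d r) (levelSet U d s) := by
    intro r s hrs
    refine disjoint_left.2 fun u hur hus => ?_
    have hpow : (2 : ℝ)⁻¹ ^ (s - 1) ≤ (2 : ℝ)⁻¹ ^ r :=
      pow_le_pow_of_le_one (by norm_num) (by norm_num) (by omega)
    linarith [(mem_filter.1 hur).2.1, (mem_filter.1 hus).2.2]
  intro r _ s _ hrs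
  rcases hrs.lt_or_gt with h | h
  exacts [key r s h, (key s r h).symm]

theorem sum_sub_card_mul_le_sum_filter_lt {t : ℝ} (ht : 0 ≤ t) :
    ∑ u ∈ U, d u - #U * t ≤ ∑ u ∈ U.filter (fun u => t < d u), d u := by
  have hlight : ∑ u ∈ U.filter (fun u => ¬ t < d u), d u ≤ #U * t :=
    calc ∑ u ∈ U.filter (fun u => ¬ t < d u), d u
        ≤ #(U.filter fun u => ¬ t < d u) * t := by
          simpa only [nsmul_eq_mul] using
            sum_le_card_nsmul (U.filter fun u => ¬ t < d u) d t fun u hu =>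
              not_lt.1 (mem_filter.1 hu).2
      _ ≤ #U * t := by gcongr; exact filter_subset _ _
  linarith [sum_filter_add_sum_filter_not U (fun u => t < d u) d]

variable {U d}

theorem exists_mem_levelSet {m : ℕ} {u : α} (hu : u ∈ U) (hu1 : d u ≤ 1)
    (hum : (2 : ℝ)⁻¹ ^ m < d u) : ∃ r ∈ Icc 1 m, u ∈ levelSet U d r := by
  classical
  have hex : ∃ r, (2 : ℝ)⁻¹ ^ r < d u := ⟨m, hum⟩
  set r := Nat.find hex
  have hr : (2 : ℝ)⁻¹ ^ r < d u := Nat.find_spec hex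
  have hr0 : r ≠ 0 := fun h => by rw [h, pow_zero] at hr; linarith
  have hprev : d u ≤ (2 : ℝ)⁻¹ ^ (r - 1) := not_lt.1 (Nat.find_min hex (by omega))
  exact ⟨r, mem_Icc.2 ⟨by omega, Nat.find_min' hex hum⟩, mem_filter.2 ⟨hu, hr, hprev⟩⟩

theorem sum_filter_lt_eq_sum_levelSet (hd1 : ∀ u ∈ U, d u ≤ 1) (m : ℕ) :
    ∑ u ∈ U.filter (fun u => (2 : ℝ)⁻¹ ^ m < d u), d u =
      ∑ r ∈ Icc 1 m, ∑ u ∈ levelSet U d r, d u := by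
  rw [← sum_disjiUnion _ _ ((pairwiseDisjoint_levelSet U d).subset (Set.subset_univ _))]
  congr 1
  ext u
  simp only [mem_disjiUnion, mem_filter]
  constructor
  · rintro ⟨hu, hum⟩
    exact exists_mem_levelSet hu (hd1 u hu) hum
  · rintro ⟨r, hr, hur⟩
    obtain ⟨hu, hlow, -⟩ := mem_filter.1 hur
    have hpow : (2 : ℝ)⁻¹ ^ m ≤ (2 : ℝ)⁻¹ ^ r :=
      pow_le_pow_of_le_one (by norm_num) (by norm_num) (mem_Icc.1 hr).2
    exact ⟨hu, hpow.trans_lt hlow⟩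

theorem sum_levelSet_le (r : ℕ) :
    ∑ u ∈ levelSet U d r, d u ≤ #(levelSet U d r) * (2 : ℝ)⁻¹ ^ (r - 1) := by
  simpa only [nsmul_eq_mul] using
    sum_le_card_nsmul (levelSet U d r) d _ fun u hu => (mem_filter.1 hu).2.2

theorem exists_levelSet_mass_ge (hd1 : ∀ u ∈ U, d u ≤ 1) {m : ℕ} (hm : 1 ≤ m) :
    ∃ r ∈ Icc 1 m,
      (∑ u ∈ U, d u - #U * (2 : ℝ)⁻¹ ^ m) / m ≤ #(levelSet U d r) * (2 : ℝ)⁻¹ ^ (r - 1) := by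
  refine exists_le_of_sum_le (nonempty_Icc.2 hm) ?_
  have hm0 : (m : ℝ) ≠ 0 := by positivity
  calc ∑ _r ∈ Icc 1 m, (∑ u ∈ U, d u - #U * (2 : ℝ)⁻¹ ^ m) / m
      = ∑ u ∈ U, d u - #U * (2 : ℝ)⁻¹ ^ m := by
        rw [sum_const, Nat.card_Icc, Nat.add_sub_cancel, nsmul_eq_mul, mul_div_cancel₀ _ hm0]
    _ ≤ ∑ u ∈ U.filter (fun u => (2 : ℝ)⁻¹ ^ m < d u), d u :=
        sum_sub_card_mul_le_sum_filter_lt U d (by positivity)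
    _ = ∑ r ∈ Icc 1 m, ∑ u ∈ levelSet U d r, d u := sum_filter_lt_eq_sum_levelSet hd1 m
    _ ≤ ∑ r ∈ Icc 1 m, #(levelSet U d r) * (2 : ℝ)⁻¹ ^ (r - 1) :=
        sum_le_sum fun r _ => sum_levelSet_le r

end LevelSets

theorem inv_two_pow_natCeil_logb_one_div_le {x : ℝ} (hx : 0 < x) :
    (2 : ℝ)⁻¹ ^ ⌈logb 2 (1 / x)⌉₊ ≤ x := by
  have h : 1 / x ≤ (2 : ℝ) ^ ⌈logb 2 (1 / x)⌉₊ := by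
    rw [← rpow_natCast, ← logb_le_iff_le_rpow one_lt_two (by positivity)]
    exact Nat.le_ceil _
  rw [inv_pow, inv_le_comm₀ (by positivity) hx, inv_eq_one_div]
  exact h

theorem level_set_pigeonhole {α : Type*}
    (U : Finset α)
    (d : α → ℝ) (hd : ∀ u ∈ U, d u ∈ Set.Icc (0 : ℝ) 1)
    (dbar : ℝ) (hdbar : dbar = (∑ u ∈ U, d u) / U.card)
    (hpos : 0 < dbar)
    (k : ℕ) (hk : k = ⌈Real.logb 2 (1 / dbar)⌉₊ + 2) :
    ∃ r ∈ Finset.Icc 1 (k - 1),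
      2 ^ r * dbar / (4 * ((k : ℝ) - 1)) ≤
        ((U.filter (fun u => (2 : ℝ)⁻¹ ^ r < d u ∧ d u ≤ (2 : ℝ)⁻¹ ^ (r - 1))).card : ℝ)
          / U.card := by
  have hn : (0 : ℝ) < #U :=
    (Nat.cast_nonneg _).lt_of_ne fun h => by rw [← h, div_zero] at hdbar; linarith
  have hthreshold : (2 : ℝ)⁻¹ ^ (k - 1) ≤ dbar / 2 := by
    rw [hk, show ⌈logb 2 (1 / dbar)⌉₊ + 2 - 1 = ⌈logb 2 (1 / dbar)⌉₊ + 1 by omega, pow_succ]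
    linarith [inv_two_pow_natCeil_logb_one_div_le hpos]
  obtain ⟨r, hr, hmass⟩ :=
    exists_levelSet_mass_ge (fun u hu => (hd u hu).2) (m := k - 1) (by omega)
  refine ⟨r, hr, ?_⟩
  obtain ⟨s, rfl⟩ : ∃ s, r = s + 1 := ⟨r - 1, by have := (mem_Icc.1 hr).1; omega⟩
  have hk1 : ((k - 1 : ℕ) : ℝ) = k - 1 := by rw [Nat.cast_sub (by omega), Nat.cast_one]
  have hkpos : (0 : ℝ) < k - 1 := by rw [← hk1]; exact_mod_cast (show 0 < k - 1 by omega)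
  rw [hk1, Nat.add_sub_cancel] at hmass
  have hheavy : dbar * #U / 2 ≤ ∑ u ∈ U, d u - #U * (2 : ℝ)⁻¹ ^ (k - 1) := by
    have hsum : ∑ u ∈ U, d u = dbar * #U := by rw [hdbar, div_mul_cancel₀ _ hn.ne']
    linarith [mul_le_mul_of_nonneg_left hthreshold hn.le]
  change _ ≤ (#(levelSet U d (s + 1)) : ℝ) / #U
  rw [le_div_iff₀ hn, pow_succ]
  calc 2 ^ s * 2 * dbar / (4 * ((k : ℝ) - 1)) * #U
      = 2 ^ s * ((dbar * #U / 2) / (k - 1)) := by field_simp; ring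
    _ ≤ 2 ^ s * ((∑ u ∈ U, d u - #U * (2 : ℝ)⁻¹ ^ (k - 1)) / (k - 1)) := by gcongr
    _ ≤ 2 ^ s * (#(levelSet U d (s + 1)) * (2 : ℝ)⁻¹ ^ s) := by gcongr
    _ = #(levelSet U d (s + 1)) := by
        rw [inv_pow, mul_left_comm, mul_inv_cancel₀ (by positivity), mul_one]
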